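/- In the MV register, the state after receiving a set S of updates equals the set of maximal elements of S, for any order and multiplicity of delivery: folding insert over any list whose element set is S, starting from the empty antichain, yields the maximal elements of S. -/

import Mathlib

/-!
Every state reached is the set of maximal elements of the updates received so far: inserting
`u` into the maximal elements of `A` gives the maximal elements of `insert u A`, because an
element of `A` lying below some element of `A` also lies below a maximal one, so discarding it
early loses nothing. Hence the final state depends only on the set of updates delivered.
-/

open Classical in
/-- MV-register insertion: applying an update `u` to a state `T'` yields the
set of maximal elements of `T' ∪ {u}`. -/
noncomputable def mvInsert {α : Type} [PartialOrder α] [DecidableEq α]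
    (T' : Finset α) (u : α) : Finset α :=
  (insert u T').filter (fun x => ∀ y ∈ insert u T', ¬ x < y)

open Classical in
noncomputable def maximalElements {α : Type} [Preorder α] (A : Finset α) : Finset α :=
  A.filter (fun x => ∀ y ∈ A, ¬ x < y)

section

variable {α : Type} [PartialOrder α] [DecidableEq α]

theorem mvInsert_maximalElements (A : Finset α) (u : α) :
    mvInsert (maximalElements A) u = maximalElements (insert u A) := by
  classical
  ext x
  simp only [mvInsert, maximalElements, Finset.mem_filter, Finset.mem_insert, forall_eq_or_imp]
  constructor
  · rintro ⟨hx, hxu, hxmax⟩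
    refine ⟨hx.imp_right And.left, hxu, fun y hy hxy => ?_⟩
    obtain ⟨z, hyz, hz⟩ := A.exists_le_maximal hy
    exact hxmax z ⟨hz.prop, fun w hw => hz.not_gt hw⟩ (hxy.trans_le hyz)
  · rintro ⟨hx, hxu, hxmax⟩
    exact ⟨hx.imp_right fun hxA => ⟨hxA, hxmax⟩, hxu, fun y hy => hxmax y hy.1⟩

theorem foldl_mvInsert_maximalElements (l : List α) (A : Finset α) :
    l.foldl mvInsert (maximalElements A) = maximalElements (A ∪ l.toFinset) := by
  induction l generalizing A with
  | nil => simp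
  | cons u l ih =>
    rw [List.foldl_cons, mvInsert_maximalElements, ih, List.toFinset_cons, Finset.union_insert,
      Finset.insert_union]

end

open Classical in
/-- In the MV register, the state after receiving a set `S` of updates equals
the set of maximal elements of `S`, for any order and multiplicity of
delivery: folding `mvInsert` over any list whose element set is `S`, starting
from the empty antichain, yields the maximal elements of `S`. -/
theorem mv_fold_is_maximal_elements
    {α : Type} [PartialOrder α] [DecidableEq α]
    (S : Finset α) (l : List α)
    (hset : ∀ u, u ∈ l ↔ u ∈ S) :
    l.foldl mvInsert ∅ = S.filter (fun x => ∀ y ∈ S, ¬ x < y) := by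
  have hl : l.toFinset = S := by
    ext u
    simp [hset]
  have hempty : maximalElements (∅ : Finset α) = ∅ := Finset.filter_empty _
  calc l.foldl mvInsert ∅ = l.foldl mvInsert (maximalElements ∅) := by rw [hempty]
    _ = maximalElements S := by
      rw [foldl_mvInsert_maximalElements, Finset.empty_union, hl]
    _ = S.filter (fun x => ∀ y ∈ S, ¬ x < y) := rfl
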